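/- arXiv:1405.2540 — 4 statements merged into one kernel-verified Lean document; each statement's English description precedes it below -/
import Mathlib

section
/- Let A be a commutative unital algebra that is finitely generated as an algebra over ℂ, and let M be a finitely generated A-module. Then the A-finite ℂ-linear functionals on M separate the points of M; that is, the intersection of the kernels of all A-finite functionals φ : M → ℂ is the zero submodule. (Equivalently, the space of A-finite functionals is dense in the full ℂ-linear dual of M.) -/
/-! If `x ≠ 0`, pick a maximal ideal `m` containing the annihilator of `x`. By the Krull
intersection theorem `x ∉ mᵏM` for some `k`, and `M/mᵏM` is a finite module over `A/mᵏ`, which is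
finite-dimensional over `ℂ` since it is an Artinian algebra of finite type. A functional on
`M/mᵏM` not vanishing at the image of `x` pulls back to an `A`-finite functional on `M`: all its
translates factor through the finite-dimensional quotient. -/

/-- A ℂ-linear functional `φ` on `M` is *A-finite* if the `A`-submodule of the
ℂ-linear dual of `M` generated by `φ` (i.e. the set of functionals `x ↦ φ (a • x)`,
`a ∈ A`, together with its ℂ-span) is finite-dimensional over ℂ. -/
def IsAFinite (A : Type*) [CommRing A] [Algebra ℂ A]
    {M : Type*} [AddCommGroup M] [Module A M] [Module ℂ M] [IsScalarTower ℂ A M]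
    (φ : M →ₗ[ℂ] ℂ) : Prop :=
  FiniteDimensional ℂ
    (Submodule.span ℂ {ψ : M →ₗ[ℂ] ℂ | ∃ a : A, ∀ x : M, ψ x = φ (a • x)})

theorem Ideal.krullDimLE_zero_quotient_pow {R : Type*} [CommRing R] (m : Ideal R) [m.IsMaximal]
    (k : ℕ) : Ring.KrullDimLE 0 (R ⧸ m ^ k) :=
  Ideal.krullDimLE_zero_quotient_iff_forall_minimalPrimes_isMaximal.mpr fun J hJ => by
    have : J.IsPrime := hJ.1.1
    exact ‹m.IsMaximal›.eq_of_le this.ne_top (this.le_of_pow_le hJ.1.2) ▸ ‹m.IsMaximal›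

theorem Module.finite_quotient_pow_of_isMaximal (K : Type*) {A : Type*} [Field K] [CommRing A]
    [Algebra K A] [Algebra.FiniteType K A] (m : Ideal A) [m.IsMaximal] (k : ℕ) :
    Module.Finite K (A ⧸ m ^ k) :=
  have := Algebra.FiniteType.isNoetherianRing K A
  have := m.krullDimLE_zero_quotient_pow k
  have := IsNoetherianRing.isArtinianRing_of_krullDimLE_zero (R := A ⧸ m ^ k)
  Module.finite_of_isArtinianRing K (A ⧸ m ^ k)

theorem Module.finite_quotient_pow_smul_top (K : Type*) {A M : Type*} [Field K] [CommRing A]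
    [Algebra K A] [Algebra.FiniteType K A] [AddCommGroup M] [Module A M] [Module K M]
    [IsScalarTower K A M] [Module.Finite A M] (m : Ideal A) [m.IsMaximal] (k : ℕ) :
    Module.Finite K (M ⧸ m ^ k • (⊤ : Submodule A M)) :=
  have := Module.finite_quotient_pow_of_isMaximal K m k
  Module.Finite.trans (A ⧸ m ^ k) _

theorem exists_isMaximal_notMem_pow_smul_top {A M : Type*} [CommRing A] [IsNoetherianRing A]
    [AddCommGroup M] [Module A M] [Module.Finite A M] {x : M} (hx : x ≠ 0) :
    ∃ m : Ideal A, m.IsMaximal ∧ ∃ k : ℕ, x ∉ m ^ k • (⊤ : Submodule A M) := by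
  have hann : (A ∙ x).annihilator ≠ ⊤ := fun h =>
    hx <| one_smul A x ▸ (Submodule.mem_annihilator_span_singleton x 1).mp (h ▸ Submodule.mem_top)
  obtain ⟨m, hm, hle⟩ := Ideal.exists_le_maximal _ hann
  refine ⟨m, hm, not_forall.mp fun hmem => hm.ne_top <| m.eq_top_iff_one.mpr ?_⟩
  obtain ⟨r, hr⟩ := (m.mem_iInf_smul_pow_eq_bot_iff x).mp (Submodule.mem_iInf _ |>.mpr hmem)
  have : 1 - (r : A) ∈ m := hle <| (Submodule.mem_annihilator_span_singleton x _).mpr <| by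
    rw [sub_smul, one_smul, hr, sub_self]
  simpa using m.add_mem this r.2

theorem isAFinite_comp_of_finiteDimensional (A : Type*) [CommRing A] [Algebra ℂ A]
    {M Q : Type*} [AddCommGroup M] [Module A M] [Module ℂ M] [IsScalarTower ℂ A M]
    [AddCommGroup Q] [Module A Q] [Module ℂ Q] [IsScalarTower ℂ A Q] [FiniteDimensional ℂ Q]
    (π : M →ₗ[A] Q) (ψ : Q →ₗ[ℂ] ℂ) : IsAFinite A (ψ ∘ₗ π.restrictScalars ℂ) := by
  refine Submodule.finiteDimensional_of_le (S₂ := LinearMap.range (π.restrictScalars ℂ).dualMap) ?_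
  rw [Submodule.span_le]
  rintro ψ' ⟨a, ha⟩
  refine ⟨ψ ∘ₗ (LinearMap.lsmul A Q a).restrictScalars ℂ, LinearMap.ext fun y => ?_⟩
  simp [ha]

/-- If `A` is a commutative unital ℂ-algebra which is finitely generated as a ℂ-algebra
and `M` is a finitely generated `A`-module, then the `A`-finite ℂ-linear functionals on
`M` separate points: the intersection of their kernels is zero. -/
theorem zFinite_functionals_separate
    (A : Type*) [CommRing A] [Algebra ℂ A] [Algebra.FiniteType ℂ A]
    (M : Type*) [AddCommGroup M] [Module A M] [Module ℂ M] [IsScalarTower ℂ A M]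
    [Module.Finite A M]
    (x : M) (hx : ∀ φ : M →ₗ[ℂ] ℂ, IsAFinite A φ → φ x = 0) :
    x = 0 := by
  by_contra hx0
  have := Algebra.FiniteType.isNoetherianRing ℂ A
  obtain ⟨m, hm, k, hk⟩ := exists_isMaximal_notMem_pow_smul_top (A := A) hx0
  have := Module.finite_quotient_pow_smul_top ℂ (M := M) m k
  let π := (m ^ k • (⊤ : Submodule A M)).mkQ
  have hπx : π x ≠ 0 := by simpa [π] using hk
  obtain ⟨ψ, hψ⟩ := not_forall.mp (mt (Module.forall_dual_apply_eq_zero_iff ℂ (π x)).mp hπx)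
  exact hψ (hx _ (isAFinite_comp_of_finiteDimensional A π ψ))
end

section
/- Let A be a commutative Noetherian unital ring and let M be a finitely generated A-module. Then the intersection, over all maximal ideals m of A and all natural numbers i, of the submodules mⁱ·M is zero: ⋂_{m maximal} ⋂_{i ∈ ℕ} (mⁱ·M) = 0. -/
/-! Krull's intersection theorem gives, for `x ∈ ⋂ᵢ mⁱ • M`, some `r ∈ m` with
`r • x = x`; hence `1 - r` kills `x`, so the annihilator of `x` is contained in no maximal
ideal and `x = 0`. -/

theorem Ideal.torsionOf_sup_eq_top_of_mem_iInf_pow_smul {A M : Type*} [CommRing A]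
    [IsNoetherianRing A] [AddCommGroup M] [Module A M] [Module.Finite A M] (I : Ideal A)
    {x : M} (hx : x ∈ (⨅ i : ℕ, I ^ i • ⊤ : Submodule A M)) :
    Ideal.torsionOf A M x ⊔ I = ⊤ := by
  obtain ⟨⟨r, hr⟩, hrx⟩ := (I.mem_iInf_smul_pow_eq_bot_iff x).mp hx
  have h_torsion : 1 - r ∈ Ideal.torsionOf A M x := by
    rw [Ideal.mem_torsionOf_iff, sub_smul, one_smul, hrx, sub_self]
  rw [Ideal.eq_top_iff_one, ← sub_add_cancel 1 r]
  exact Submodule.add_mem_sup h_torsion hr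

/-- Artin–Rees / Krull intersection: for a commutative Noetherian unital ring `A`
and a finitely generated `A`-module `M`, the intersection over all maximal ideals `m`
of `A` and all natural numbers `i` of the submodules `mⁱ • M` is zero. -/
theorem iInf_maximal_pow_smul_eq_bot
    (A : Type*) [CommRing A] [IsNoetherianRing A]
    (M : Type*) [AddCommGroup M] [Module A M] [Module.Finite A M] :
    ⨅ (m : Ideal A) (_ : m.IsMaximal) (i : ℕ), (m ^ i • ⊤ : Submodule A M) = ⊥ := by
  refine eq_bot_iff.mpr fun x hx ↦ ?_
  simp only [Submodule.mem_iInf] at hx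
  rw [Submodule.mem_bot, ← Ideal.torsionOf_eq_top_iff A x]
  by_contra h_ne_top
  obtain ⟨m, hm, h_le⟩ := Ideal.exists_le_maximal _ h_ne_top
  have h_sup :=
    m.torsionOf_sup_eq_top_of_mem_iInf_pow_smul (Submodule.mem_iInf _ |>.mpr (hx m hm))
  exact hm.ne_top (sup_eq_right.mpr h_le ▸ h_sup)
end

section
/- Let A be a commutative unital Noetherian integral domain with fraction field K. Let V be a finite-dimensional K-linear subspace of the K-vector space K^ℕ of all sequences of elements of K, and let M := V ∩ A^ℕ be the set of sequences in V all of whose terms lie in the image of A in K. Then M is a finitely generated A-module. -/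
/-!
Since `V` is finite-dimensional, the descending family of subspaces `{v ∈ V | v i = 0 for i ∈ t}`
reaches `0` at some finite `t`, so restriction to the coordinates in `t` is injective on `V`.
It maps `M` into `A^t`, a finitely generated module over the Noetherian ring `A`, hence `M` is
finitely generated.
-/

namespace Submodule

theorem exists_finset_eq_zero_of_forall_apply_eq_zero {R ι P : Type*} [Ring R] [AddCommGroup P]
    [Module R P] (V : Submodule R (ι → P)) [IsArtinian R V] :
    ∃ t : Finset ι, ∀ f ∈ V, (∀ i ∈ t, f i = 0) → f = 0 := by
  let coord (i : ι) : V →ₗ[R] P := (LinearMap.proj i).comp V.subtype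
  obtain ⟨t, ht⟩ := Finset.exists_inf_eq_iInf fun i => LinearMap.ker (coord i)
  have hbot : ⨅ i, LinearMap.ker (coord i) = ⊥ :=
    eq_bot_iff.mpr fun v hv => (mem_bot R).mpr <| Subtype.ext <| funext fun i =>
      LinearMap.mem_ker.mp (mem_iInf _ |>.mp hv i)
  refine ⟨t, fun f hf hzero => ?_⟩
  have hmem : (⟨f, hf⟩ : V) ∈ t.inf fun i => LinearMap.ker (coord i) := by
    simpa [Finset.inf_eq_iInf, coord] using hzero
  rw [ht, hbot, mem_bot] at hmem
  exact congrArg Subtype.val hmem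

theorem fg_of_forall_apply_mem_of_forall_eq_zero {R ι P : Type*} [CommRing R]
    [IsNoetherianRing R] [AddCommGroup P] [Module R P] (M : Submodule R (ι → P)) (t : Finset ι)
    {N : Submodule R P} (hN : N.FG) (hmem : ∀ f ∈ M, ∀ i ∈ t, f i ∈ N)
    (hzero : ∀ f ∈ M, (∀ i ∈ t, f i = 0) → f = 0) : M.FG := by
  let restrict : (ι → P) →ₗ[R] (t → P) := LinearMap.pi fun i => LinearMap.proj (i : ι)
  have hmap : (M.map restrict).FG := by
    refine (fg_pi fun _ => hN).of_le ?_
    rintro _ ⟨f, hf, rfl⟩ i -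
    exact hmem f hf i i.2
  have hker : M ⊓ LinearMap.ker restrict = ⊥ := by
    refine eq_bot_iff.mpr fun f ⟨hf, hker⟩ => (mem_bot R).mpr <| hzero f hf fun i hi => ?_
    exact congrFun (LinearMap.mem_ker.mp hker) ⟨i, hi⟩
  exact fg_of_fg_map_of_fg_inf_ker restrict hmap (hker ▸ fg_bot)

end Submodule

/-- Let `A` be a commutative unital Noetherian integral domain with fraction field `K`.
Let `V` be a finite-dimensional `K`-linear subspace of `K^ℕ`, and let
`M := V ∩ A^ℕ` be the `A`-submodule of sequences in `V` all of whose terms lie in the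
image of `A` in `K`. Then `M` is a finitely generated `A`-module. -/
theorem inter_sequences_fg
    (A : Type*) [CommRing A] [IsDomain A] [IsNoetherianRing A]
    (V : Submodule (FractionRing A) (ℕ → FractionRing A)) [FiniteDimensional (FractionRing A) V]
    (M : Submodule A (ℕ → FractionRing A))
    (hM : (M : Set (ℕ → FractionRing A)) =
      {f : ℕ → FractionRing A | f ∈ V ∧ ∀ n : ℕ, f n ∈ (algebraMap A (FractionRing A)).range}) :
    M.FG := by
  have hmemM (f) (hf : f ∈ M) := (Set.ext_iff.mp hM f).mp hf
  have hone : (1 : Submodule A (FractionRing A)).FG :=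
    Submodule.one_eq_span (R := A) (A := FractionRing A) ▸ Submodule.fg_span_singleton 1
  obtain ⟨t, ht⟩ := V.exists_finset_eq_zero_of_forall_apply_eq_zero
  exact M.fg_of_forall_apply_mem_of_forall_eq_zero t hone
    (fun f hf i _ => Submodule.mem_one.mpr ((hmemM f hf).2 i)) (fun f hf => ht f (hmemM f hf).1)
end

section
/- Let n be a natural number and let A := ℂ[ℤⁿ] be the group algebra over ℂ of the free abelian group ℤⁿ (equivalently, the Laurent polynomial ring over ℂ in n variables). Let M be an A-module whose underlying ℂ-vector space has countable dimension (admits a countable spanning set). Suppose that for every unital ℂ-algebra homomorphism χ : A → ℂ, the space Hom_A(M, ℂ_χ) of A-module homomorphisms from M to the one-dimensional A-module ℂ_χ is finite-dimensional over ℂ. Then Hom_A(M, A) is a finitely generated A-module. -/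
/-!
Fix one character `χ : A → ℂ` and let `d = dim Hom_A(M, ℂ_χ)`. If `φ₁, …, φᵣ ∈ Hom_A(M, A)` are
linearly independent, the image `L` of `M` in `Aʳ` is finitely generated and its coordinate
functionals are independent. Nakayama's lemma for the ideal `ker χ` gives
`dim_ℂ L/(ker χ)L ≥ r`, and functionals on `L/(ker χ)L` pulled back to `M` are `r` independent
elements of `Hom_A(M, ℂ_χ)`; hence `r ≤ d`. With independent families bounded, some finite
`S ⊆ M` is annihilated by no nonzero `ψ : M → A` (otherwise one builds arbitrarily long
triangular, hence independent, families), so `Hom_A(M, A)` embeds into `A^S` and is finitely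
generated over the Noetherian ring `A`.
-/

open Module Submodule

section Triangular

variable {R M : Type*} [CommRing R] [IsDomain R] [AddCommGroup M] [Module R M]

theorem linearIndependent_of_apply_eq_zero_of_lt {ι : Type*} [Fintype ι] [LinearOrder ι]
    (ψ : ι → M →ₗ[R] R) (x : ι → M) (hlt : ∀ i j, i < j → ψ j (x i) = 0)
    (hdiag : ∀ i, ψ i (x i) ≠ 0) : LinearIndependent R ψ := by
  rw [Fintype.linearIndependent_iff]
  intro c hc i
  induction i using WellFoundedLT.induction with
  | ind i ih =>
    have hsum : ∑ j, c j * ψ j (x i) = 0 := by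
      simpa using LinearMap.congr_fun hc (x i)
    rw [Finset.sum_eq_single i (fun j _ hji => ?_) (by simp)] at hsum
    · exact (mul_eq_zero.1 hsum).resolve_right (hdiag i)
    · rcases hji.lt_or_gt with hji | hij
      · rw [ih j hji, zero_mul]
      · rw [hlt i j hij, mul_zero]

theorem exists_linearIndependent_of_forall_finset
    (h : ∀ s : Finset M, ∃ ψ : M →ₗ[R] R, ψ ≠ 0 ∧ ∀ x ∈ s, ψ x = 0) (r : ℕ) :
    ∃ ψ : Fin r → M →ₗ[R] R, LinearIndependent R ψ := by
  classical
  suffices ∃ (ψ : Fin r → M →ₗ[R] R) (x : Fin r → M),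
      (∀ i j, i < j → ψ j (x i) = 0) ∧ ∀ i, ψ i (x i) ≠ 0 by
    obtain ⟨ψ, x, hlt, hdiag⟩ := this
    exact ⟨ψ, linearIndependent_of_apply_eq_zero_of_lt ψ x hlt hdiag⟩
  induction r with
  | zero => exact ⟨Fin.elim0, Fin.elim0, fun i => i.elim0, fun i => i.elim0⟩
  | succ r ih =>
    obtain ⟨ψ, x, hlt, hdiag⟩ := ih
    obtain ⟨ψ', hψ'0, hψ'⟩ := h (Finset.univ.image x)
    obtain ⟨y, hy⟩ := DFunLike.ne_iff.1 hψ'0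
    refine ⟨Fin.snoc ψ ψ', Fin.snoc x y, fun i j hij => ?_, fun i => ?_⟩
    · induction j using Fin.lastCases with
      | last =>
        obtain ⟨i, rfl⟩ := Fin.exists_castSucc_eq.2 hij.ne
        simpa using hψ' (x i) (by simp)
      | cast j =>
        obtain ⟨i, rfl⟩ := Fin.exists_castSucc_eq.2 (hij.trans (Fin.castSucc_lt_last j)).ne
        simpa using hlt i j (by simpa using hij)
    · induction i using Fin.lastCases with
      | last => simpa using hy
      | cast i => simpa using hdiag i

variable [IsNoetherianRing R]

theorem Module.Finite.linearMap_of_card_le (d : ℕ)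
    (h : ∀ (r : ℕ) (ψ : Fin r → M →ₗ[R] R), LinearIndependent R ψ → r ≤ d) :
    Module.Finite R (M →ₗ[R] R) := by
  obtain ⟨s, hs⟩ : ∃ s : Finset M, ∀ ψ : M →ₗ[R] R, (∀ x ∈ s, ψ x = 0) → ψ = 0 := by
    by_contra! hs
    obtain ⟨ψ, hψ⟩ := exists_linearIndependent_of_forall_finset
      (fun s => (hs s).imp fun _ hψ => hψ.symm) (d + 1)
    exact (h _ ψ hψ).not_gt (Nat.lt_succ_self d)
  let ev : (M →ₗ[R] R) →ₗ[R] (s → R) := LinearMap.pi fun x => LinearMap.applyₗ x.1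
  refine Module.Finite.of_injective ev ((injective_iff_map_eq_zero ev).2 fun ψ hψ => hs ψ ?_)
  exact fun x hx => congr_fun hψ ⟨x, hx⟩

end Triangular

section Character

variable {k A : Type*} [Field k] [CommRing A] [Algebra k A] (χ : A →ₐ[k] k)

/-- `Hom_A(M, k_χ)`, as a set of `k`-linear functionals on `M`. -/
def equivariantFunctionals (M : Type*) [AddCommGroup M] [Module A M] [Module k M] :
    Set (M →ₗ[k] k) :=
  {φ | ∀ (a : A) (m : M), φ (a • m) = χ a * φ m}

variable {M N : Type*} [AddCommGroup M] [Module A M] [Module k M] [IsScalarTower k A M]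
  [AddCommGroup N] [Module A N] [Module k N] [IsScalarTower k A N]

theorem smul_eq_apply_smul_quotient (a : A) (v : N ⧸ (RingHom.ker χ • ⊤ : Submodule A N)) :
    a • v = χ a • v := by
  obtain ⟨x, rfl⟩ := mkQ_surjective _ v
  have hmem : a - algebraMap k A (χ a) ∈ RingHom.ker χ := by simp
  rw [← sub_eq_zero, ← algebraMap_smul A (χ a), ← sub_smul, ← map_smul, mkQ_apply,
    Quotient.mk_eq_zero]
  exact smul_mem_smul hmem mem_top

theorem rank_le_finrank_equivariantFunctionals
    [FiniteDimensional k (span k (equivariantFunctionals χ M))]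
    {V : Type*} [AddCommGroup V] [Module A V] [Module k V] [IsScalarTower k A V]
    (hV : ∀ (a : A) (v : V), a • v = χ a • v) (p : M →ₗ[A] V) (hp : Function.Surjective p) :
    Module.rank k V ≤ finrank k (span k (equivariantFunctionals χ M)) := by
  let D : Dual k V →ₗ[k] span k (equivariantFunctionals χ M) :=
    (p.restrictScalars k).dualMap.codRestrict _ fun ξ => subset_span fun a m => by simp [hV]
  have hD : Function.Injective D := fun ξ η h =>
    LinearMap.dualMap_injective_of_surjective (f := p.restrictScalars k) hp congr($h.1)
  have : FiniteDimensional k V := (finite_dual_iff k).1 <|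
    FiniteDimensional.of_injective (V₂ := span k (equivariantFunctionals χ M)) D hD
  rw [← finrank_eq_rank, ← Subspace.dual_finrank_eq]
  exact_mod_cast LinearMap.finrank_le_finrank_of_injective hD

theorem card_le_rank_quotient [IsDomain A] [Module.Finite A N] {ι : Type*} [Fintype ι]
    (ξ : ι → N →ₗ[A] A) (hξ : LinearIndependent A ξ) :
    (Fintype.card ι : Cardinal) ≤ Module.rank k (N ⧸ (RingHom.ker χ • ⊤ : Submodule A N)) := by
  set Q := (RingHom.ker χ • ⊤ : Submodule A N)
  by_contra! hlt
  have : FiniteDimensional k (N ⧸ Q) :=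
    Module.rank_lt_aleph0_iff.1 (hlt.trans Cardinal.natCast_lt_aleph0)
  rw [← finrank_eq_rank, Nat.cast_lt] at hlt
  let b := finBasis k (N ⧸ Q)
  choose y hy using fun i => mkQ_surjective Q (b i)
  have hspan : ⊤ ≤ span A (Set.range y) ⊔ Q := by
    have : map Q.mkQ (span A (Set.range y)) = ⊤ := by
      rw [map_span, ← Set.range_comp, show Q.mkQ ∘ y = b from funext hy, eq_top_iff]
      exact b.span_eq.ge.trans (span_le_restrictScalars k A _)
    rw [sup_comm, ← comap_map_mkQ, this, comap_top]
  -- Nakayama: some `a ≡ 1 mod ker χ`, hence `a ≠ 0`, maps `N` into the span of the lifts `y`,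
  -- so a functional on `N` is determined by its values on `y`.
  obtain ⟨a, ha1, ha⟩ :=
    exists_sub_one_mem_and_smul_le_of_fg_of_le_sup Module.Finite.fg_top le_rfl hspan
  have ha0 : a ≠ 0 := by
    rintro rfl
    simp at ha1
  let ev : (N →ₗ[A] A) →ₗ[A] (Fin (finrank k (N ⧸ Q)) → A) :=
    LinearMap.pi fun j => LinearMap.applyₗ (y j)
  have hev : LinearMap.ker ev = ⊥ := by
    refine (LinearMap.ker_eq_bot').2 fun ψ hψ => LinearMap.ext fun x => ?_
    have hy : span A (Set.range y) ≤ LinearMap.ker ψ :=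
      span_le.2 <| Set.range_subset_iff.2 fun j => congr_fun hψ j
    have : a * ψ x = 0 := by
      simpa using hy (ha (smul_mem_pointwise_smul x a ⊤ mem_top))
    simpa [ha0] using this
  simpa using hlt.trans_le (hξ.map' ev hev).fintype_card_le_finrank

theorem card_le_finrank_equivariantFunctionals [IsDomain A] [IsNoetherianRing A]
    [FiniteDimensional k (span k (equivariantFunctionals χ M))] {ι : Type*} [Fintype ι]
    (φ : ι → M →ₗ[A] A) (hφ : LinearIndependent A φ) :
    Fintype.card ι ≤ finrank k (span k (equivariantFunctionals χ M)) := by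
  let Φ := LinearMap.pi φ
  let ξ : ι → LinearMap.range Φ →ₗ[A] A :=
    fun i => LinearMap.proj i ∘ₗ (LinearMap.range Φ).subtype
  have hξ : LinearIndependent A ξ := LinearIndependent.of_comp Φ.rangeRestrict.dualMap hφ
  let Q : Submodule A (LinearMap.range Φ) := RingHom.ker χ • ⊤
  have hp : Function.Surjective (Q.mkQ ∘ₗ Φ.rangeRestrict) :=
    (mkQ_surjective Q).comp Φ.surjective_rangeRestrict
  exact_mod_cast (card_le_rank_quotient χ ξ hξ).trans
    (rank_le_finrank_equivariantFunctionals χ (smul_eq_apply_smul_quotient χ) _ hp)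

end Character

theorem hom_to_group_algebra_finite_general
    (n : ℕ)
    (M : Type*) [AddCommGroup M]
    [Module (MonoidAlgebra ℂ (Multiplicative (Fin n → ℤ))) M]
    [Module ℂ M] [IsScalarTower ℂ (MonoidAlgebra ℂ (Multiplicative (Fin n → ℤ))) M]
    (hfin : ∀ χ : MonoidAlgebra ℂ (Multiplicative (Fin n → ℤ)) →ₐ[ℂ] ℂ,
      FiniteDimensional ℂ (Submodule.span ℂ
        {φ : M →ₗ[ℂ] ℂ | ∀ (a : MonoidAlgebra ℂ (Multiplicative (Fin n → ℤ))) (m : M),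
          φ (a • m) = χ a * φ m})) :
    Module.Finite (MonoidAlgebra ℂ (Multiplicative (Fin n → ℤ)))
      (M →ₗ[MonoidAlgebra ℂ (Multiplicative (Fin n → ℤ))]
        MonoidAlgebra ℂ (Multiplicative (Fin n → ℤ))) := by
  have : IsNoetherianRing (MonoidAlgebra ℂ (Multiplicative (Fin n → ℤ))) :=
    Algebra.FiniteType.isNoetherianRing ℂ _
  let χ₀ : MonoidAlgebra ℂ (Multiplicative (Fin n → ℤ)) →ₐ[ℂ] ℂ := MonoidAlgebra.lift ℂ ℂ _ 1
  have : FiniteDimensional ℂ (span ℂ (equivariantFunctionals χ₀ M)) := hfin χ₀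
  exact Module.Finite.linearMap_of_card_le _ fun r ψ hψ => by
    simpa using card_le_finrank_equivariantFunctionals χ₀ ψ hψ

/-- Let `A := ℂ[ℤⁿ]` be the group algebra of the free abelian group `ℤⁿ` over `ℂ`
(the Laurent polynomial ring in `n` variables). Let `M` be an `A`-module whose
underlying ℂ-vector space has countable dimension. If for every unital ℂ-algebra
homomorphism `χ : A → ℂ` the space `Hom_A(M, ℂ_χ)` (realized as the space of
ℂ-linear functionals `φ` with `φ (a • m) = χ a * φ m`) is finite-dimensional over ℂ,
then `Hom_A(M, A)` is a finitely generated `A`-module. -/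
theorem hom_to_group_algebra_finite
    (n : ℕ)
    (M : Type*) [AddCommGroup M]
    [Module (MonoidAlgebra ℂ (Multiplicative (Fin n → ℤ))) M]
    [Module ℂ M] [IsScalarTower ℂ (MonoidAlgebra ℂ (Multiplicative (Fin n → ℤ))) M]
    (hcount : ∃ s : Set M, s.Countable ∧ Submodule.span ℂ s = ⊤)
    (hfin : ∀ χ : MonoidAlgebra ℂ (Multiplicative (Fin n → ℤ)) →ₐ[ℂ] ℂ,
      FiniteDimensional ℂ (Submodule.span ℂ
        {φ : M →ₗ[ℂ] ℂ | ∀ (a : MonoidAlgebra ℂ (Multiplicative (Fin n → ℤ))) (m : M),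
          φ (a • m) = χ a * φ m})) :
    Module.Finite (MonoidAlgebra ℂ (Multiplicative (Fin n → ℤ)))
      (M →ₗ[MonoidAlgebra ℂ (Multiplicative (Fin n → ℤ))]
        MonoidAlgebra ℂ (Multiplicative (Fin n → ℤ))) :=
  hom_to_group_algebra_finite_general n M hfin
end
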